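/- arXiv:1807.10010 — 2 statements merged into one kernel-verified Lean document; each statement's English description precedes it below -/
import Mathlib

section
/- Let G be a group of exponent dividing 2 (so abelian), M^× an abelian group on which G acts trivially, and c : G × G → M^× a 2-cocycle such that there exists a function d : G → M^× and a map ε : G × G → {±1} with c(σ,τ)² = d(σ)d(τ)d(στ)⁻¹·ε(σ,τ) for all σ,τ. If M^× is the multiplicative group of a field in which the only roots of unity are ±1, then c(σ,τ) = ±c(τ,σ) for all σ,τ ∈ G. -/
/-- Let `G` be a group of exponent dividing 2, `M` a field whose only roots of unity are
`±1`, with `G` acting trivially on `M^×`, and let `c : G × G → M^×` be a 2-cocycle such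
that `c(σ,τ)² = d(σ)d(τ)d(στ)⁻¹ · ε(σ,τ)` for some `d : G → M^×` and a sign function `ε`.
Then `c(σ,τ) = ± c(τ,σ)` for all `σ, τ ∈ G`. -/
theorem stmt_5 (G : Type*) [Group G] (hG : ∀ g : G, g * g = 1)
    (M : Type*) [Field M]
    (hM : ∀ x : Mˣ, (∃ n : ℕ, 0 < n ∧ x ^ n = 1) → x = 1 ∨ x = -1)
    (c : G → G → Mˣ)
    (hcocycle : ∀ σ τ ρ : G, c σ τ * c (σ * τ) ρ = c τ ρ * c σ (τ * ρ))
    (d : G → Mˣ) (ε : G → G → Mˣ) (hε : ∀ σ τ : G, ε σ τ = 1 ∨ ε σ τ = -1)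
    (hsq : ∀ σ τ : G, (c σ τ) ^ 2 = d σ * d τ * (d (σ * τ))⁻¹ * ε σ τ) :
    ∀ σ τ : G, c σ τ = c τ σ ∨ c σ τ = -(c τ σ) := by
  intro σ τ
  have hinv : ∀ g : G, g⁻¹ = g := fun g => inv_eq_of_mul_eq_one_left (hG g)
  have hcomm : σ * τ = τ * σ := by
    conv_lhs => rw [← hinv (σ * τ), mul_inv_rev, hinv, hinv]
  set x : Mˣ := c σ τ * (c τ σ)⁻¹ with hx
  have hx2 : x ^ 2 = ε σ τ * (ε τ σ)⁻¹ := by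
    have h1 := hsq σ τ
    have h2 := hsq τ σ
    rw [hcomm] at h1
    have : x ^ 2 = (c σ τ) ^ 2 * ((c τ σ) ^ 2)⁻¹ := by
      rw [hx, mul_pow, inv_pow]
    rw [this, h1, h2, Units.ext_iff]
    push_cast
    field_simp
  have hε2 : ∀ a b : G, (ε a b) ^ 2 = 1 := by
    intro a b
    rcases hε a b with h | h <;> rw [h] <;> simp
  have hx4 : x ^ 4 = 1 := by
    have : x ^ 4 = (ε σ τ) ^ 2 * ((ε τ σ) ^ 2)⁻¹ := by
      rw [show (4:ℕ) = 2*2 by rfl, pow_mul, hx2, mul_pow, inv_pow]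
    rw [this, hε2, hε2]; simp
  rcases hM x ⟨4, by norm_num, hx4⟩ with h | h
  · left
    have := mul_inv_eq_one.mp (hx ▸ h)
    exact this
  · right
    have : c σ τ * (c τ σ)⁻¹ = -1 := hx ▸ h
    calc c σ τ = c σ τ * (c τ σ)⁻¹ * c τ σ := by group
    _ = -1 * c τ σ := by rw [this]
    _ = -(c τ σ) := by rw [neg_one_mul]
end

section
/- Let G be a group of order 16 having a quotient isomorphic to the dihedral group D₄ of order 8, with projection π : G → D₄, and suppose that every element of G mapping under π to an element of order 4 has order 8. Then G is isomorphic to the dihedral group D₈ of order 16, the semidihedral (quasidihedral) group QD₈ of order 16, or the generalized quaternion group Q₁₆ of order 16. -/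
/-- Relations for the semidihedral (quasidihedral) group of order 16:
`⟨s, t ∣ s⁸, t², t·s·t·s⁵⟩`. -/
def semidihedralRels : Set (FreeGroup (Fin 2)) :=
  {FreeGroup.of 0 ^ 8, FreeGroup.of 1 ^ 2,
    FreeGroup.of 1 * FreeGroup.of 0 * FreeGroup.of 1 * FreeGroup.of 0 ^ 5}

/-- The semidihedral group `QD₈` of order 16 (SmallGroup(16,8)). -/
abbrev SemidihedralGroup16 : Type := PresentedGroup semidihedralRels

/-- Model groups of order 16: generated by `a` of order 8 and `t` with
`t * a * t⁻¹ = a ^ k` and `t ^ 2 = a ^ m`. -/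
structure MG (k m : ℕ) where
  i : ZMod 8
  e : ZMod 2
  deriving DecidableEq, Fintype

namespace MG
variable {k m : ℕ}

instance : Mul (MG k m) :=
  ⟨fun x y => ⟨x.i + ((k ^ x.e.val : ℕ) : ZMod 8) * y.i +
      ((m * (x.e.val * y.e.val) : ℕ) : ZMod 8), x.e + y.e⟩⟩
instance : One (MG k m) := ⟨⟨0, 0⟩⟩
instance : Inv (MG k m) :=
  ⟨fun x => ⟨-(((k ^ x.e.val : ℕ) : ZMod 8) * x.i) - ((m * x.e.val : ℕ) : ZMod 8), -x.e⟩⟩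

/-- The parameter values we care about. -/
def Cond (k m : ℕ) : Prop := (k = 3 ∧ m = 0) ∨ (k = 7 ∧ m = 0) ∨ (k = 7 ∧ m = 4)

set_option maxHeartbeats 4000000 in
instance [h : Fact (Cond k m)] : Group (MG k m) :=
  Group.ofLeftAxioms
    (by rcases h.out with ⟨h1, h2⟩ | ⟨h1, h2⟩ | ⟨h1, h2⟩ <;> subst h1 <;> subst h2 <;> decide)
    (by rcases h.out with ⟨h1, h2⟩ | ⟨h1, h2⟩ | ⟨h1, h2⟩ <;> subst h1 <;> subst h2 <;> decide)
    (by rcases h.out with ⟨h1, h2⟩ | ⟨h1, h2⟩ | ⟨h1, h2⟩ <;> subst h1 <;> subst h2 <;> decide)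

theorem card_eq : Fintype.card (MG k m) = 16 := by
  rfl

end MG

section Hom

variable {G : Type*} [Group G] {a t : G} {k m : ℕ}

theorem mg_conj_pow (hk : t * a = a ^ k * t) : ∀ n : ℕ, t * a ^ n = a ^ (k * n) * t := by
  intro n
  induction n with
  | zero => simp
  | succ n ih =>
    rw [pow_succ, ← mul_assoc, ih, mul_assoc, hk, ← mul_assoc, ← pow_add, Nat.mul_succ]

theorem mg_pow_conj_pow (hk : t * a = a ^ k * t) :
    ∀ e n : ℕ, t ^ e * a ^ n = a ^ (k ^ e * n) * t ^ e := by
  intro e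
  induction e with
  | zero => simp
  | succ e ih =>
    intro n
    rw [pow_succ', mul_assoc, ih, ← mul_assoc, mg_conj_pow hk, mul_assoc, ← pow_succ']
    have hexp : k * (k ^ e * n) = k ^ (e + 1) * n := by ring
    rw [hexp]

theorem apow_eq (ha : a ^ 8 = 1) (z : ZMod 8) (n : ℕ) (h : z = (n : ZMod 8)) :
    a ^ z.val = a ^ n := by
  subst h
  rw [ZMod.val_natCast]
  conv_rhs => rw [← Nat.div_add_mod n 8]
  rw [pow_add, pow_mul, ha, one_pow, one_mul]

theorem zmod2_cases : ∀ e : ZMod 2, e = 0 ∨ e = 1 := by decide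

/-- The canonical homomorphism from the model group. -/
def mgHom (k m : ℕ) [Fact (MG.Cond k m)] (a t : G) (ha : a ^ 8 = 1)
    (hk : t * a = a ^ k * t) (hm : t ^ 2 = a ^ m) : MG k m →* G :=
  MonoidHom.mk' (fun x => a ^ x.i.val * t ^ x.e.val) (by
    rintro ⟨xi, xe⟩ ⟨yi, ye⟩
    show a ^ (ZMod.val (xi + _ * yi + _)) * t ^ (ZMod.val (xe + ye)) = _
    rcases zmod2_cases xe with hx | hx <;> rcases zmod2_cases ye with hy | hy <;>
        subst hx <;> subst hy <;>
      simp only [ZMod.val_zero, ZMod.val_one, pow_zero, pow_one, mul_one, one_mul,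
        Nat.mul_zero, Nat.zero_mul, Nat.mul_one, Nat.cast_zero, add_zero, Nat.cast_one,
        show ((0 : ZMod 2) + 0).val = 0 from rfl, show ((0 : ZMod 2) + 1).val = 1 from rfl,
        show ((1 : ZMod 2) + 0).val = 1 from rfl, show ((1 : ZMod 2) + 1).val = 0 from rfl]
    · -- e = (0,0)
      rw [apow_eq ha _ (xi.val + yi.val)
        (by push_cast [ZMod.natCast_val, ZMod.cast_id]; ring), pow_add]
    · -- (0,1)
      rw [apow_eq ha _ (xi.val + yi.val)
        (by push_cast [ZMod.natCast_val, ZMod.cast_id]; ring), pow_add, mul_assoc]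
    · -- (1,0)
      rw [apow_eq ha _ (xi.val + k * yi.val)
        (by push_cast [ZMod.natCast_val, ZMod.cast_id]; ring)]
      conv_rhs => rw [mul_assoc, mg_conj_pow hk]
      rw [pow_add, mul_assoc]
    · -- (1,1)
      calc a ^ ((xi + (k : ZMod 8) * yi + (m : ZMod 8)).val)
          = a ^ (xi.val + k * yi.val + m) := by
            refine apow_eq ha _ _ ?_
            push_cast [ZMod.natCast_val, ZMod.cast_id]; ring
        _ = a ^ xi.val * (a ^ (k * yi.val) * a ^ m) := by rw [pow_add, pow_add, mul_assoc]
        _ = a ^ xi.val * (a ^ (k * yi.val) * (t * t)) := by rw [← hm, pow_two]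
        _ = a ^ xi.val * (t * a ^ yi.val * t) := by rw [mg_conj_pow hk, mul_assoc]
        _ = a ^ xi.val * t * (a ^ yi.val * t) := by group)

theorem mgHom_injective (k m : ℕ) [Fact (MG.Cond k m)] (a t : G) (ha : a ^ 8 = 1)
    (hk : t * a = a ^ k * t) (hm : t ^ 2 = a ^ m)
    (horda : orderOf a = 8) (hnt : ∀ n : ℕ, t ≠ a ^ n) :
    Function.Injective (mgHom k m a t ha hk hm) := by
  rw [injective_iff_map_eq_one]
  rintro ⟨i, e⟩ hx
  have hx' : a ^ i.val * t ^ e.val = 1 := hx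
  rcases zmod2_cases e with he | he <;> subst he
  · rw [ZMod.val_zero, pow_zero, mul_one] at hx'
    have hdvd : orderOf a ∣ i.val := orderOf_dvd_of_pow_eq_one hx'
    rw [horda] at hdvd
    have hlt : i.val < 8 := ZMod.val_lt i
    have : i.val = 0 := by omega
    have : i = 0 := by rwa [← ZMod.val_eq_zero]
    subst this; rfl
  · rw [ZMod.val_one, pow_one] at hx'
    exfalso
    apply hnt (8 - i.val)
    have h1 : a ^ i.val * a ^ (8 - i.val) = 1 := by
      rw [← pow_add, Nat.add_sub_cancel' (le_of_lt (ZMod.val_lt i)), ha]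
    calc t = (a ^ i.val)⁻¹ * (a ^ i.val * t) := by group
    _ = (a ^ i.val)⁻¹ * 1 := by rw [hx']
    _ = (a ^ i.val)⁻¹ := mul_one _
    _ = a ^ (8 - i.val) := inv_eq_of_mul_eq_one_right h1

/-- Main glue: a group of order 16 with suitable generators is isomorphic to a model group. -/
theorem mg_iso (k m : ℕ) [Fact (MG.Cond k m)] [Fintype G] (hcard : Fintype.card G = 16)
    (a t : G) (horda : orderOf a = 8) (hk : t * a = a ^ k * t) (hm : t ^ 2 = a ^ m)
    (hnt : ∀ n : ℕ, t ≠ a ^ n) : Nonempty (G ≃* MG k m) := by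
  have ha : a ^ 8 = 1 := by rw [← horda]; exact pow_orderOf_eq_one a
  have hbij : Function.Bijective (mgHom k m a t ha hk hm) :=
    (Fintype.bijective_iff_injective_and_card _).mpr
      ⟨mgHom_injective k m a t ha hk hm horda hnt, by rw [MG.card_eq, hcard]⟩
  exact ⟨(MulEquiv.ofBijective _ hbij).symm⟩

end Hom

instance fact30 : Fact (MG.Cond 3 0) := ⟨Or.inl ⟨rfl, rfl⟩⟩
instance fact70 : Fact (MG.Cond 7 0) := ⟨Or.inr (Or.inl ⟨rfl, rfl⟩)⟩
instance fact74 : Fact (MG.Cond 7 4) := ⟨Or.inr (Or.inr ⟨rfl, rfl⟩)⟩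

/-- `MG 7 0` is the dihedral group of order 16. -/
noncomputable def mgDihedralIso : MG 7 0 ≃* DihedralGroup 8 := by
  refine MulEquiv.ofBijective
    (MonoidHom.mk' (fun x => if x.e = 0 then .r x.i else .sr (-x.i)) ?_) ?_
  · decide
  · decide

/-- `MG 7 4` is the generalized quaternion group of order 16. -/
noncomputable def mgQuaternionIso : MG 7 4 ≃* QuaternionGroup 4 := by
  refine MulEquiv.ofBijective
    (MonoidHom.mk' (fun x => if x.e = 0 then .a x.i else .xa (-x.i)) ?_) ?_
  · decide
  · decide

section SD

theorem sd_rel {r : FreeGroup (Fin 2)} (hr : r ∈ semidihedralRels) :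
    PresentedGroup.mk semidihedralRels r = 1 :=
  (QuotientGroup.eq_one_iff r).mpr (Subgroup.subset_normalClosure hr)

/-- relations hold in `MG 3 0` -/
def sdToMG : SemidihedralGroup16 →* MG 3 0 :=
  PresentedGroup.toGroup (f := ![(⟨1, 0⟩ : MG 3 0), ⟨0, 1⟩]) (by
    intro r hr
    simp only [semidihedralRels, Set.mem_insert_iff, Set.mem_singleton_iff] at hr
    rcases hr with h | h | h <;> subst h <;>
      simp only [map_mul, map_pow, FreeGroup.lift_apply_of] <;> decide)

theorem sd_s_pow : (PresentedGroup.of 0 : SemidihedralGroup16) ^ 8 = 1 := by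
  have := sd_rel (show FreeGroup.of 0 ^ 8 ∈ semidihedralRels from Set.mem_insert _ _)
  rwa [map_pow] at this

theorem sd_t_sq : (PresentedGroup.of 1 : SemidihedralGroup16) ^ 2 = 1 := by
  have := sd_rel (show FreeGroup.of 1 ^ 2 ∈ semidihedralRels from
    Set.mem_insert_of_mem _ (Set.mem_insert _ _))
  rwa [map_pow] at this

theorem sd_ts : (PresentedGroup.of 1 : SemidihedralGroup16) * PresentedGroup.of 0 =
    PresentedGroup.of 0 ^ 3 * PresentedGroup.of 1 := by
  set s : SemidihedralGroup16 := PresentedGroup.of 0 with hs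
  set tt : SemidihedralGroup16 := PresentedGroup.of 1 with htt
  have hrel : tt * s * tt * s ^ 5 = 1 := by
    have := sd_rel (show FreeGroup.of 1 * FreeGroup.of 0 * FreeGroup.of 1 * FreeGroup.of 0 ^ 5
        ∈ semidihedralRels from Set.mem_insert_of_mem _ (Set.mem_insert_of_mem _ rfl))
    rwa [map_mul, map_mul, map_mul, map_pow] at this
  have h35 : s ^ 3 * s ^ 5 = 1 := by rw [← pow_add]; exact sd_s_pow
  have hinv5 : (s ^ 5)⁻¹ = s ^ 3 := by
    rw [inv_eq_iff_mul_eq_one, ← pow_add]; exact sd_s_pow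
  have htinv : tt⁻¹ = tt := by
    rw [inv_eq_iff_mul_eq_one, ← pow_two]; exact sd_t_sq
  have h3 : tt * s * tt = s ^ 3 := by
    rw [← hinv5, eq_inv_iff_mul_eq_one]; exact hrel
  calc tt * s = tt * s * tt * tt⁻¹ := by group
  _ = s ^ 3 * tt⁻¹ := by rw [h3]
  _ = s ^ 3 * tt := by rw [htinv]

noncomputable def mgSDHom : MG 3 0 →* SemidihedralGroup16 :=
  mgHom 3 0 (PresentedGroup.of 0) (PresentedGroup.of 1) sd_s_pow sd_ts (by simpa using sd_t_sq)

theorem sd_left_inv : ∀ x : MG 3 0, sdToMG (mgSDHom x) = x := by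
  intro x
  have h1 : sdToMG (PresentedGroup.of 0) = ⟨1, 0⟩ := PresentedGroup.toGroup.of _
  have h2 : sdToMG (PresentedGroup.of 1) = ⟨0, 1⟩ := PresentedGroup.toGroup.of _
  have : sdToMG (mgSDHom x) = (⟨1, 0⟩ : MG 3 0) ^ x.i.val * (⟨0, 1⟩ : MG 3 0) ^ x.e.val := by
    show sdToMG (_ * _) = _
    rw [map_mul, map_pow, map_pow, h1, h2]
  rw [this]
  revert x
  decide

theorem sd_right_inv : ∀ x : SemidihedralGroup16, mgSDHom (sdToMG x) = x := by
  have : mgSDHom.comp sdToMG = MonoidHom.id _ := by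
    apply PresentedGroup.ext
    intro x
    fin_cases x
    · show mgSDHom (sdToMG (PresentedGroup.of 0)) = PresentedGroup.of 0
      rw [show sdToMG (PresentedGroup.of 0) = ⟨1, 0⟩ from PresentedGroup.toGroup.of _]
      rw [show mgSDHom (⟨1, 0⟩ : MG 3 0) =
        PresentedGroup.of 0 ^ (1 : ZMod 8).val * PresentedGroup.of 1 ^ (0 : ZMod 2).val from rfl]
      norm_num [show (1 : ZMod 8).val = 1 from rfl]
    · show mgSDHom (sdToMG (PresentedGroup.of 1)) = PresentedGroup.of 1
      rw [show sdToMG (PresentedGroup.of 1) = ⟨0, 1⟩ from PresentedGroup.toGroup.of _]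
      rw [show mgSDHom (⟨0, 1⟩ : MG 3 0) =
        PresentedGroup.of 0 ^ (0 : ZMod 8).val * PresentedGroup.of 1 ^ (1 : ZMod 2).val from rfl]
      norm_num [ZMod.val_one]
  intro x
  calc mgSDHom (sdToMG x) = (mgSDHom.comp sdToMG) x := rfl
  _ = x := by rw [this]; rfl

/-- `MG 3 0` is the semidihedral group of order 16. -/
noncomputable def mgSDIso : MG 3 0 ≃* SemidihedralGroup16 :=
  MulEquiv.ofBijective mgSDHom
    ⟨Function.LeftInverse.injective sd_left_inv,
     fun x => ⟨sdToMG x, sd_right_inv x⟩⟩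

end SD

/-- A group of order 16 with a quotient `π : G → D₄` onto the dihedral group of order 8,
such that every element mapping to an element of order 4 has order 8, is isomorphic to
the dihedral group `D₈` of order 16, the semidihedral group `QD₈` of order 16, or the
generalized quaternion group `Q₁₆` of order 16. -/
theorem stmt_10 (G : Type*) [Group G] [Fintype G] (hcard : Fintype.card G = 16)
    (π : G →* DihedralGroup 4) (hsurj : Function.Surjective π)
    (horder : ∀ g : G, orderOf (π g) = 4 → orderOf g = 8) :
    Nonempty (G ≃* DihedralGroup 8) ∨ Nonempty (G ≃* SemidihedralGroup16) ∨
      Nonempty (G ≃* QuaternionGroup 4) := by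
  classical
  obtain ⟨a, hπa⟩ := hsurj (DihedralGroup.r 1)
  have horda : orderOf a = 8 := horder a (by rw [hπa, DihedralGroup.orderOf_r_one])
  have ha8 : a ^ 8 = 1 := by rw [← horda]; exact pow_orderOf_eq_one a
  obtain ⟨t, hπt⟩ := hsurj (DihedralGroup.sr 0)
  -- the kernel of `π` is `{1, a ^ 4}`
  have hz1 : π (a ^ 4) = 1 := by rw [map_pow, hπa]; decide
  have hzne : a ^ 4 ≠ 1 := by
    intro h
    have := orderOf_dvd_of_pow_eq_one h
    rw [horda] at this
    omega
  have hkerset : {x : G | π x = 1} = {1, a ^ 4} := by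
    have hq : Nat.card (G ⧸ π.ker) = 8 := by
      rw [Nat.card_congr (QuotientGroup.quotientKerEquivOfSurjective π hsurj).toEquiv]
      simp [Nat.card_eq_fintype_card, DihedralGroup.card]
    have hGcard : Nat.card G = 16 := by rw [Nat.card_eq_fintype_card, hcard]
    have hker2 : Nat.card π.ker = 2 := by
      have := Subgroup.card_eq_card_quotient_mul_card_subgroup π.ker
      rw [hGcard, hq] at this
      omega
    have hsub : ({1, a ^ 4} : Set G) ⊆ {x : G | π x = 1} := by
      rintro x (rfl | rfl)
      · simp
      · exact hz1
    have hset : {x : G | π x = 1} = (π.ker : Set G) := by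
      ext x; exact (π.mem_ker).symm
    have hncard : ({x : G | π x = 1}).ncard = 2 := by
      rw [hset, ← Nat.card_coe_set_eq]
      exact hker2
    exact (Set.eq_of_subset_of_ncard_le hsub
      (by rw [hncard, Set.ncard_pair (Ne.symm hzne)]) (Set.toFinite _)).symm
  have hker : ∀ x : G, π x = 1 → x = 1 ∨ x = a ^ 4 := by
    intro x hx
    have : x ∈ ({1, a ^ 4} : Set G) := by rw [← hkerset]; exact hx
    simpa using this
  have hfiber : ∀ x c : G, π x = π c → x = c ∨ x = a ^ 4 * c := by
    intro x c h
    have h1 : π (x * c⁻¹) = 1 := by rw [map_mul, map_inv, h, mul_inv_cancel]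
    rcases hker _ h1 with h2 | h2
    · left
      have := mul_inv_eq_one.mp h2
      exact this
    · right
      rw [mul_inv_eq_iff_eq_mul] at h2
      exact h2
  -- conjugation
  have hconj : π (t * a * t⁻¹) = π (a ^ 3) := by
    rw [map_mul, map_mul, map_inv, hπt, hπa, map_pow, hπa]
    decide
  have ht2 : π (t ^ 2) = 1 := by rw [map_pow, hπt]; decide
  have ht2' := hker _ ht2
  have hnt : ∀ n : ℕ, t ≠ a ^ n := by
    intro n h
    apply_fun π at h
    rw [hπt, map_pow, hπa, DihedralGroup.r_one_pow] at h
    simp at h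
  rcases hfiber _ _ hconj with hc | hc
  · -- semidihedral cases : t * a * t⁻¹ = a ^ 3
    have hk3 : t * a = a ^ 3 * t := by
      rw [← hc]; group
    rcases ht2' with hm0 | hm4
    · have hm : t ^ 2 = a ^ 0 := by rw [pow_zero]; exact hm0
      obtain ⟨e⟩ := mg_iso 3 0 hcard a t horda hk3 hm hnt
      exact Or.inr (Or.inl ⟨e.trans mgSDIso⟩)
    · -- replace t by t * a
      have hk' : (t * a) * a = a ^ 3 * (t * a) := by
        calc (t * a) * a = (a ^ 3 * t) * a := by rw [hk3]
        _ = a ^ 3 * (t * a) := mul_assoc _ _ _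
      have ht'2 : (t * a) ^ 2 = a ^ 0 := by
        rw [pow_zero]
        have h1 : t * a ^ 3 = a ^ 9 * t := mg_conj_pow hk3 3
        calc (t * a) ^ 2 = (a ^ 3 * t) * (a ^ 3 * t) := by rw [pow_two, hk3]
        _ = a ^ 3 * (t * a ^ 3) * t := by group
        _ = a ^ 3 * (a ^ 9 * t) * t := by rw [h1]
        _ = a ^ 12 * t ^ 2 := by rw [pow_two]; group
        _ = a ^ 12 * a ^ 4 := by rw [hm4]
        _ = (a ^ 8) ^ 2 := by rw [← pow_add, ← pow_mul]
        _ = 1 := by rw [ha8, one_pow]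
      have hnt' : ∀ n : ℕ, t * a ≠ a ^ n := by
        intro n h
        apply hnt (n + 7)
        have hainv : a⁻¹ = a ^ 7 := by
          rw [inv_eq_iff_mul_eq_one, ← pow_succ']; exact ha8
        calc t = (t * a) * a⁻¹ := by group
        _ = a ^ n * a ^ 7 := by rw [h, hainv]
        _ = a ^ (n + 7) := by rw [← pow_add]
      obtain ⟨e⟩ := mg_iso 3 0 hcard a (t * a) horda hk' ht'2 hnt'
      exact Or.inr (Or.inl ⟨e.trans mgSDIso⟩)
  · -- dihedral / quaternion cases : t * a * t⁻¹ = a ^ 7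
    rw [← pow_add] at hc
    norm_num at hc
    have hk7 : t * a = a ^ 7 * t := by
      rw [← hc]; group
    rcases ht2' with hm0 | hm4
    · have hm : t ^ 2 = a ^ 0 := by rw [pow_zero]; exact hm0
      obtain ⟨e⟩ := mg_iso 7 0 hcard a t horda hk7 hm hnt
      exact Or.inl ⟨e.trans mgDihedralIso⟩
    · obtain ⟨e⟩ := mg_iso 7 4 hcard a t horda hk7 hm4 hnt
      exact Or.inr (Or.inr ⟨e.trans mgQuaternionIso⟩)
end
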